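/- For fixed mean direction m, the von Mises entropy H(c) = −c·I₁(c)/I₀(c) + ln(2π I₀(c)) is strictly decreasing in the concentration c on (0, ∞), with H(0) = ln(2π). -/

import Mathlib

open Real MeasureTheory intervalIntegral

/-- Modified Bessel function of the first kind of order 0. -/
noncomputable def besselI0 (c : ℝ) : ℝ := (1 / (2 * π)) * ∫ x in (-π)..π, Real.exp (c * Real.cos x)

/-- Modified Bessel function of the first kind of order 1. -/
noncomputable def besselI1 (c : ℝ) : ℝ :=
  (1 / (2 * π)) * ∫ x in (-π)..π, Real.cos x * Real.exp (c * Real.cos x)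

/-- "Second moment" integral used for the derivative of `besselI1`. -/
noncomputable def besselJ (c : ℝ) : ℝ :=
  (1 / (2 * π)) * ∫ x in (-π)..π, Real.cos x * Real.cos x * Real.exp (c * Real.cos x)

lemma cont_aux (g : ℝ → ℝ) (hg : Continuous g) (c : ℝ) :
    Continuous (fun x => g x * Real.exp (c * Real.cos x)) :=
  hg.mul ((continuous_const.mul Real.continuous_cos).rexp)

lemma hasDerivAt_int (g : ℝ → ℝ) (hg : Continuous g) (hgb : ∀ x, |g x| ≤ 1) (c : ℝ) :
    HasDerivAt (fun c => ∫ x in (-π)..π, g x * Real.exp (c * Real.cos x))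
      (∫ x in (-π)..π, g x * Real.cos x * Real.exp (c * Real.cos x)) c := by
  have key := intervalIntegral.hasDerivAt_integral_of_dominated_loc_of_deriv_le
    (F := fun c x => g x * Real.exp (c * Real.cos x))
    (F' := fun c x => g x * Real.cos x * Real.exp (c * Real.cos x))
    (x₀ := c) (bound := fun _ => Real.exp (|c| + 1)) (a := -π) (b := π)
    (μ := volume) (s := Metric.ball c 1) (Metric.ball_mem_nhds c one_pos)
    (Filter.Eventually.of_forall fun x =>
      ((cont_aux g hg x).aestronglyMeasurable))
    ((cont_aux g hg c).intervalIntegrable _ _)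
    ((cont_aux (fun x => g x * Real.cos x) (hg.mul Real.continuous_cos) c).aestronglyMeasurable)
    ?_ (continuous_const.intervalIntegrable _ _) ?_
  · exact key.2
  · refine Filter.Eventually.of_forall fun t _ x hx => ?_
    have hxc : |x| ≤ |c| + 1 := by
      have := mem_ball_iff_norm.mp hx
      calc |x| = |x - c + c| := by ring_nf
        _ ≤ |x - c| + |c| := abs_add_le _ _
        _ ≤ |c| + 1 := by simp [Real.norm_eq_abs] at this; linarith
    have h1 : Real.exp (x * Real.cos t) ≤ Real.exp (|c| + 1) := by
      apply Real.exp_le_exp.mpr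
      calc x * Real.cos t ≤ |x * Real.cos t| := le_abs_self _
        _ = |x| * |Real.cos t| := abs_mul _ _
        _ ≤ (|c| + 1) * 1 := by
            apply mul_le_mul hxc (Real.abs_cos_le_one t) (abs_nonneg _)
            positivity
        _ = |c| + 1 := mul_one _
    have h2 : ‖g t * Real.cos t * Real.exp (x * Real.cos t)‖
        = |g t| * |Real.cos t| * Real.exp (x * Real.cos t) := by
      rw [Real.norm_eq_abs, abs_mul, abs_mul, abs_of_pos (Real.exp_pos _)]
    rw [h2]
    calc |g t| * |Real.cos t| * Real.exp (x * Real.cos t)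
        ≤ 1 * Real.exp (x * Real.cos t) :=
          mul_le_mul_of_nonneg_right
            (mul_le_one₀ (hgb t) (abs_nonneg _) (Real.abs_cos_le_one t)) (Real.exp_pos _).le
      _ = Real.exp (x * Real.cos t) := one_mul _
      _ ≤ Real.exp (|c| + 1) := h1
  · refine Filter.Eventually.of_forall fun t _ x _ => ?_
    have h := (((hasDerivAt_id x).mul_const (Real.cos t)).exp).const_mul (g t)
    refine h.congr_deriv ?_
    simp only [id_eq]
    ring

lemma besselI0_pos (c : ℝ) : 0 < besselI0 c := by
  unfold besselI0
  have h : 0 < ∫ x in (-π)..π, Real.exp (c * Real.cos x) := by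
    apply intervalIntegral.intervalIntegral_pos_of_pos_on
    · exact ((continuous_const.mul Real.continuous_cos).rexp).intervalIntegrable _ _
    · exact fun x _ => Real.exp_pos _
    · linarith [Real.pi_pos]
  have := Real.pi_pos
  positivity

lemma hasDeriv_besselI0 (c : ℝ) : HasDerivAt besselI0 (besselI1 c) c := by
  have h := (hasDerivAt_int (fun _ => 1) continuous_const (fun x => by norm_num) c).const_mul
    (1 / (2 * π))
  unfold besselI0 besselI1
  simp only [one_mul] at h
  exact h

lemma hasDeriv_besselI1 (c : ℝ) : HasDerivAt besselI1 (besselJ c) c := by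
  have h := (hasDerivAt_int Real.cos Real.continuous_cos Real.abs_cos_le_one c).const_mul
    (1 / (2 * π))
  unfold besselI1 besselJ
  exact h

/-- Variance positivity: `J I₀ - I₁² > 0`. -/
lemma variance_pos (c : ℝ) : 0 < besselJ c * besselI0 c - besselI1 c ^ 2 := by
  have hπ := Real.pi_pos
  have hI0 := besselI0_pos c
  set μc := besselI1 c / besselI0 c with hμ
  set f : ℝ → ℝ := fun x => (Real.cos x - μc) ^ 2 * Real.exp (c * Real.cos x) with hf
  -- positivity of the variance integral
  have hfnn : ∀ x, 0 ≤ f x := fun x => mul_nonneg (sq_nonneg _) (Real.exp_pos _).le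
  have hfc : Continuous f := by
    apply cont_aux
    exact (Real.continuous_cos.sub continuous_const).pow 2
  have hKpos : 0 < ∫ x in (-π)..π, f x := by
    rw [intervalIntegral.integral_of_le (by linarith)]
    rw [MeasureTheory.setIntegral_pos_iff_support_of_nonneg_ae
      (Filter.Eventually.of_forall fun x => hfnn x)
      (hfc.integrableOn_Ioc)]
    have hsub : Set.Ioc (-π) π \ {Real.arccos μc, -Real.arccos μc}
        ⊆ Function.support f ∩ Set.Ioc (-π) π := by
      rintro x ⟨hx, hxne⟩
      refine ⟨?_, hx⟩
      simp only [Function.mem_support, hf]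
      intro h0
      have hcos : Real.cos x = μc := by
        have := mul_eq_zero.mp h0
        rcases this with h | h
        · have := pow_eq_zero_iff (n := 2) (by norm_num) |>.mp h
          linarith [sub_eq_zero.mp this]
        · exact absurd h (Real.exp_ne_zero _)
      have habs : |x| ≤ π := abs_le.mpr ⟨hx.1.le, hx.2⟩
      have : Real.arccos μc = |x| := by
        rw [← hcos, ← Real.cos_abs, Real.arccos_cos (abs_nonneg x) habs]
      rcases abs_cases x with ⟨h1, _⟩ | ⟨h1, _⟩
      · exact hxne (by simp [this, h1])
      · exact hxne (by simp [this, h1])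
    have hmeas : volume (Set.Ioc (-π) π \ ({Real.arccos μc, -Real.arccos μc} : Set ℝ)) =
        volume (Set.Ioc (-π) π) := by
      apply measure_diff_null
      exact Set.Countable.measure_zero (((Set.finite_singleton _).insert _).countable) _
    calc (0 : ENNReal) < volume (Set.Ioc (-π) π) := by
          simp [Real.volume_Ioc]
          linarith
      _ = volume (Set.Ioc (-π) π \ ({Real.arccos μc, -Real.arccos μc} : Set ℝ)) := hmeas.symm
      _ ≤ volume (Function.support f ∩ Set.Ioc (-π) π) := measure_mono hsub
  -- expand the variance integral
  have ie : ∫ x in (-π)..π, Real.exp (c * Real.cos x) = 2 * π * besselI0 c := by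
    unfold besselI0; field_simp
  have i1 : ∫ x in (-π)..π, Real.cos x * Real.exp (c * Real.cos x) = 2 * π * besselI1 c := by
    unfold besselI1; field_simp
    simp only [mul_comm c]
  have iJ : ∫ x in (-π)..π, Real.cos x * Real.cos x * Real.exp (c * Real.cos x)
      = 2 * π * besselJ c := by
    unfold besselJ; field_simp
    simp only [mul_comm c]
  have hexpand : (∫ x in (-π)..π, f x)
      = 2 * π * besselJ c - 2 * μc * (2 * π * besselI1 c) + μc ^ 2 * (2 * π * besselI0 c) := by
    have : f = fun x => (Real.cos x * Real.cos x * Real.exp (c * Real.cos x)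
        - 2 * μc * (Real.cos x * Real.exp (c * Real.cos x)))
        + μc ^ 2 * Real.exp (c * Real.cos x) := by
      funext x; simp only [hf]; ring
    rw [this]
    rw [intervalIntegral.integral_add, intervalIntegral.integral_sub,
      intervalIntegral.integral_const_mul, intervalIntegral.integral_const_mul, ie, i1, iJ]
    · exact (cont_aux (fun x => Real.cos x * Real.cos x)
        (Real.continuous_cos.mul Real.continuous_cos) c).intervalIntegrable _ _
    · exact (continuous_const.mul (cont_aux Real.cos Real.continuous_cos c)).intervalIntegrable _ _
    · exact (((cont_aux (fun x => Real.cos x * Real.cos x)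
        (Real.continuous_cos.mul Real.continuous_cos) c)).sub
        (continuous_const.mul (cont_aux Real.cos Real.continuous_cos c))).intervalIntegrable _ _
    · exact (continuous_const.mul ((continuous_const.mul Real.continuous_cos).rexp)).intervalIntegrable _ _
  rw [hexpand] at hKpos
  have hμeq : μc * besselI0 c = besselI1 c := by
    rw [hμ]; field_simp
  have h2 := mul_pos hKpos hI0
  have h4 : μc ^ 2 * besselI0 c * besselI0 c = besselI1 c ^ 2 := by
    have : μc * besselI0 c * (μc * besselI0 c) = besselI1 c * besselI1 c := by rw [hμeq]
    nlinarith [this]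
  have h5 : μc * besselI0 c * besselI1 c = besselI1 c ^ 2 := by rw [hμeq]; ring
  nlinarith [h2, h4, h5, hπ]

/-- The von Mises entropy `H(c) = −c I₁(c)/I₀(c) + ln(2π I₀(c))` is strictly decreasing
in the concentration `c` on `(0, ∞)`, with `H(0) = ln(2π)`. -/
theorem vonMises_entropy_strictAnti :
    StrictAntiOn (fun c : ℝ => -c * besselI1 c / besselI0 c + Real.log (2 * π * besselI0 c))
      (Set.Ioi (0 : ℝ)) ∧
    -(0 : ℝ) * besselI1 0 / besselI0 0 + Real.log (2 * π * besselI0 0) = Real.log (2 * π) := by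
  have hπ := Real.pi_pos
  constructor
  · -- strict antitonicity via negative derivative
    set H : ℝ → ℝ := fun c => -c * besselI1 c / besselI0 c + Real.log (2 * π * besselI0 c) with hH
    have hderiv : ∀ c : ℝ, HasDerivAt H
        (((-1 * besselI1 c + -c * besselJ c) * besselI0 c - (-c * besselI1 c) * besselI1 c)
          / (besselI0 c) ^ 2 + (2 * π * besselI1 c) / (2 * π * besselI0 c)) c := by
      intro c
      have hI0 := besselI0_pos c
      have hA : HasDerivAt (fun c : ℝ => -c * besselI1 c)
          (-1 * besselI1 c + -c * besselJ c) c :=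
        ((hasDerivAt_id c).neg).mul (hasDeriv_besselI1 c) |>.congr_deriv (by simp)
      have hB := hA.div (hasDeriv_besselI0 c) (ne_of_gt hI0)
      have hC : HasDerivAt (fun c : ℝ => Real.log (2 * π * besselI0 c))
          ((2 * π * besselI1 c) / (2 * π * besselI0 c)) c := by
        have := ((hasDeriv_besselI0 c).const_mul (2 * π)).log (by positivity)
        exact this
      exact hB.add hC
    have hderiv_neg : ∀ c ∈ Set.Ioi (0 : ℝ), deriv H c < 0 := by
      intro c hc
      have hI0 := besselI0_pos c
      have hvar := variance_pos c
      rw [(hderiv c).deriv]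
      have hc' : 0 < c := hc
      have heq : ((-1 * besselI1 c + -c * besselJ c) * besselI0 c - (-c * besselI1 c) * besselI1 c)
          / (besselI0 c) ^ 2 + (2 * π * besselI1 c) / (2 * π * besselI0 c)
          = -c * (besselJ c * besselI0 c - besselI1 c ^ 2) / (besselI0 c) ^ 2 := by
        field_simp
        ring
      rw [heq]
      apply div_neg_of_neg_of_pos
      · nlinarith
      · positivity
    exact StrictAntiOn.mono (strictAntiOn_of_deriv_neg (convex_Ioi 0)
      (fun c _ => ((hderiv c).differentiableAt.continuousAt.continuousWithinAt)) (by
        rwa [interior_Ioi] )) (le_refl _) |>.mono (le_refl _)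
  · -- value at 0
    have h0 : besselI0 0 = 1 := by
      unfold besselI0
      simp [intervalIntegral.integral_const]
      field_simp
      ring
    rw [h0]
    norm_num
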